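/- Let x_1, …, x_s ∈ F_{q^m} be linearly independent over F_q and y_1, …, y_s ∈ F_{q^m}, and let t = ⌊s/2⌋. Define x̃_i = M_B(x_i) for i ≤ t and x̃_i = M_A(x_i) for i > t, where A = ⟨x_1,…,x_t⟩, B = ⟨x_{t+1},…,x_s⟩, and M_V denotes the minimal subspace polynomial of V. Then the unique interpolation polynomial I of q-degree < s with I(x_i) = y_i satisfies I = I_1 · M_B + I_2 · M_A, where I_1 is the interpolation polynomial on {(x̃_i, y_i)}_{i=1}^{t} and I_2 is the interpolation polynomial on {(x̃_i, y_i)}_{i=t+1}^{s}. -/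

import Mathlib

open Polynomial

/-- Multiplication of linearized polynomials, in the coefficient representation where the
polynomial `∑ aᵢ Xⁱ` represents the linearized polynomial `∑ aᵢ x^(qⁱ)`:
`(a·b)ᵢ = ∑_{j≤i} aⱼ (b_{i-j})^(qʲ)`. -/
noncomputable def lmul {F : Type*} [Field F] (q : ℕ) (a b : Polynomial F) : Polynomial F :=
  ∑ i ∈ Finset.range (a.natDegree + b.natDegree + 1),
    Polynomial.C (∑ j ∈ Finset.range (i + 1), a.coeff j * (b.coeff (i - j)) ^ q ^ j) *
      Polynomial.X ^ i

/-- Evaluation of the linearized polynomial represented by `a`: `a(α) = ∑ aᵢ α^(qⁱ)`. -/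
noncomputable def leval {F : Type*} [Field F] (q : ℕ) (a : Polynomial F) (α : F) : F :=
  ∑ i ∈ Finset.range (a.natDegree + 1), a.coeff i * α ^ q ^ i

/-- `M` is the minimal subspace polynomial of the `Fq`-subspace `U` of `F`:
`M` is monic, its q-degree equals `dim U`, and its root space is exactly `U`. -/
def IsMSP (Fq : Type*) {F : Type*} [Field Fq] [Field F] [Algebra Fq F] (q : ℕ)
    (U : Submodule Fq F) (M : Polynomial F) : Prop :=
  M.Monic ∧ M.natDegree = Module.finrank Fq U ∧ ∀ α : F, leval q M α = 0 ↔ α ∈ U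

/-! Both `I` and `I₁·M_B + I₂·M_A` have q-degree `< s`: the q-degree of a composition is the sum
of the q-degrees, and `dim A = t`, `dim B = s - t`. They agree at every `xᵢ`: for `i ≤ t`,
`M_A(xᵢ) = 0` and `M_B(xᵢ) = x̃ᵢ`, so the right side gives `I₁(x̃ᵢ) = yᵢ`, and symmetrically for
`i > t`. Interpolation is unique, because a linearized polynomial is `F_q`-linear, so one
vanishing at `s` independent points vanishes on their span, i.e. at `q^s` points, while a nonzero
one of q-degree `d < s` has at most `q^d` roots. -/

open Finset FiniteField

theorem frobeniusAlgHom_pow_apply (K R : Type*) [Field K] [Fintype K] [CommRing R] [Algebra K R]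
    (n : ℕ) (x : R) : (frobeniusAlgHom K R ^ n) x = x ^ Fintype.card K ^ n := by
  rw [AlgHom.coe_pow, coe_frobeniusAlgHom, pow_iterate]

section LinearizedPolynomial

variable {F : Type*} [Field F] {q : ℕ}

variable (q) in
noncomputable def linearized : F[X] →ₗ[F] F[X] :=
  lsum fun i => monomial (q ^ i)

theorem linearized_apply (a : F[X]) :
    linearized q a = ∑ i ∈ range (a.natDegree + 1), monomial (q ^ i) (a.coeff i) := by
  rw [linearized, lsum_apply, sum_over_range a fun _ => map_zero _]

theorem coeff_linearized_pow (hq : 1 < q) (a : F[X]) (i : ℕ) :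
    (linearized q a).coeff (q ^ i) = a.coeff i := by
  rw [linearized, lsum_apply, Polynomial.sum_def, finsetSum_coeff]
  simp only [coeff_monomial, (Nat.pow_right_injective hq).eq_iff, sum_ite_eq']
  exact ite_eq_left_iff.2 fun h => (notMem_support_iff.1 h).symm

theorem linearized_injective (hq : 1 < q) : Function.Injective (linearized (F := F) q) :=
  fun a b h => ext fun i => by rw [← coeff_linearized_pow hq, h, coeff_linearized_pow hq]

theorem natDegree_linearized_le (hq : 0 < q) (a : F[X]) :
    (linearized q a).natDegree ≤ q ^ a.natDegree := by
  rw [linearized_apply]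
  exact natDegree_sum_le_of_forall_le _ _ fun i hi =>
    (natDegree_monomial_le _).trans (Nat.pow_le_pow_right hq (Nat.lt_succ_iff.1 (mem_range.1 hi)))

theorem leval_eq_eval_linearized (a : F[X]) (α : F) : leval q a α = (linearized q a).eval α := by
  simp only [linearized_apply, eval_finsetSum, eval_monomial, _root_.leval]

theorem leval_eq_sum {a : F[X]} {N : ℕ} (h : a.natDegree < N) (α : F) :
    leval q a α = ∑ i ∈ range N, a.coeff i * α ^ q ^ i :=
  (sum_over_range a (f := fun i c => c * α ^ q ^ i) fun _ => zero_mul _).symm.trans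
    (sum_over_range' a (f := fun i c => c * α ^ q ^ i) (fun _ => zero_mul _) N h)

theorem leval_add (a b : F[X]) (α : F) : leval q (a + b) α = leval q a α + leval q b α := by
  simp only [leval_eq_eval_linearized, map_add, eval_add]

theorem leval_sub (a b : F[X]) (α : F) : leval q (a - b) α = leval q a α - leval q b α := by
  simp only [leval_eq_eval_linearized, map_sub, eval_sub]

theorem leval_zero_right (hq : q ≠ 0) (a : F[X]) : leval q a 0 = 0 :=
  sum_eq_zero fun i _ => by rw [zero_pow (pow_ne_zero i hq), mul_zero]

theorem natDegree_lmul_le (a b : F[X]) : (lmul q a b).natDegree ≤ a.natDegree + b.natDegree :=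
  natDegree_sum_le_of_forall_le _ _ fun _ hi =>
    (natDegree_C_mul_X_pow_le _ _).trans (Nat.lt_succ_iff.1 (mem_range.1 hi))

theorem coeff_lmul_of_lt {a b : F[X]} {i : ℕ} (hi : i < a.natDegree + b.natDegree + 1) :
    (lmul q a b).coeff i = ∑ j ∈ range (i + 1), a.coeff j * b.coeff (i - j) ^ q ^ j := by
  simp only [lmul, finsetSum_coeff, coeff_C_mul_X_pow]
  rw [sum_ite_eq, if_pos (mem_range.2 hi)]

theorem degree_lmul_lt {a b : F[X]} {m n : ℕ} (ha : a.degree < m) (hb : b.natDegree ≤ n) :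
    (lmul q a b).degree < (m + n : ℕ) := by
  rcases eq_or_ne a 0 with rfl | ha0
  · simp [lmul]
  · have := (natDegree_lt_iff_degree_lt ha0).2 ha
    exact degree_le_natDegree.trans_lt <| by
      exact_mod_cast (natDegree_lmul_le a b).trans_lt (by omega)

end LinearizedPolynomial

section OverFiniteField

variable (Fq : Type*) {F : Type*} [Field Fq] [Fintype Fq] [Field F] [Algebra Fq F]

local notation "q" => Fintype.card Fq

noncomputable def levalLinearMap (a : F[X]) : F →ₗ[Fq] F :=
  ∑ i ∈ range (a.natDegree + 1), a.coeff i • (frobeniusAlgHom Fq F ^ i).toLinearMap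

theorem levalLinearMap_apply (a : F[X]) (α : F) :
    levalLinearMap Fq a α = leval q a α := by
  simp only [levalLinearMap, LinearMap.sum_apply, LinearMap.smul_apply,
    AlgHom.toLinearMap_apply, frobeniusAlgHom_pow_apply, smul_eq_mul, _root_.leval]

theorem leval_lmul (a b : F[X]) (α : F) :
    leval q (lmul q a b) α = leval q a (leval q b α) := by
  set N := a.natDegree + b.natDegree + 1
  -- both sides expand to `∑ⱼ ∑ₖ aⱼ bₖ^(qʲ) α^(q^(j+k))`, as `x ↦ x^(qʲ)` is additive
  set g : ℕ → ℕ → F := fun j k => a.coeff j * b.coeff k ^ q ^ j * α ^ q ^ (j + k)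
  have hg : ∀ j k, N ≤ j + k → g j k = 0 := by
    intro j k h
    rcases le_or_gt j a.natDegree with hj | hj
    · simp [g, coeff_eq_zero_of_natDegree_lt (show b.natDegree < k by omega),
        zero_pow (pow_ne_zero _ Fintype.card_ne_zero)]
    · simp [g, coeff_eq_zero_of_natDegree_lt hj]
  calc leval q (lmul q a b) α
      = ∑ i ∈ range N, ∑ j ∈ range (i + 1), g j (i - j) := by
        rw [leval_eq_sum ((natDegree_lmul_le a b).trans_lt (Nat.lt_succ_self _))]
        refine sum_congr rfl fun i hi => ?_
        rw [coeff_lmul_of_lt (mem_range.1 hi), sum_mul]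
        refine sum_congr rfl fun j hj => ?_
        simp only [g]
        rw [Nat.add_sub_cancel' (Nat.lt_succ_iff.1 (mem_range.1 hj))]
    _ = ∑ j ∈ range N, ∑ k ∈ range N, g j k := by
        rw [sum_range_diag_flip]
        refine sum_congr rfl fun j _ => sum_subset (range_subset_range.2 (N.sub_le j)) ?_
        exact fun k _ hk => hg j k (by simp at hk; omega)
    _ = leval q a (leval q b α) := by
        rw [leval_eq_sum (a := a) (N := N) (by omega), leval_eq_sum (a := b) (N := N) (by omega)]
        refine sum_congr rfl fun j _ => ?_
        rw [← frobeniusAlgHom_pow_apply Fq, map_sum, mul_sum]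
        refine sum_congr rfl fun k _ => ?_
        simp only [g]
        rw [map_mul, frobeniusAlgHom_pow_apply, frobeniusAlgHom_pow_apply, ← pow_mul, pow_add,
          mul_comm (q ^ k), mul_assoc]

theorem eq_zero_of_leval_eq_zero {ι : Type*} [Fintype ι] {x : ι → F}
    (hx : LinearIndependent Fq x) {P : F[X]} (hP : P.degree < Fintype.card ι)
    (hv : ∀ i, leval q P (x i) = 0) : P = 0 := by
  set V := Submodule.span Fq (Set.range x)
  have hV : V ≤ LinearMap.ker (levalLinearMap Fq P) :=
    Submodule.span_le.2 <| Set.range_subset_iff.2 fun i => by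
      simpa [levalLinearMap_apply] using hv i
  have : Module.Finite Fq V := Module.Finite.span_of_finite Fq (Set.finite_range x)
  have : Finite V := Module.finite_of_finite Fq
  have := Fintype.ofFinite V
  by_contra hP0
  refine (map_ne_zero_iff _ (linearized_injective Fintype.one_lt_card)).2 hP0 <|
    eq_zero_of_natDegree_lt_card_of_eval_eq_zero _ Subtype.val_injective
      (fun v : V => by rw [← leval_eq_eval_linearized, ← levalLinearMap_apply Fq]; exact hV v.2)
      ?_
  calc (linearized q P).natDegree ≤ q ^ P.natDegree := natDegree_linearized_le Fintype.card_pos P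
    _ < q ^ Fintype.card ι :=
      Nat.pow_lt_pow_right Fintype.one_lt_card ((natDegree_lt_iff_degree_lt hP0).2 hP)
    _ = Fintype.card V := by
      rw [← Nat.card_eq_fintype_card (α := V), Module.natCard_eq_pow_finrank (K := Fq),
        finrank_span_eq_card hx, Nat.card_eq_fintype_card]

theorem eq_of_leval_eq {ι : Type*} [Fintype ι] {x : ι → F}
    (hx : LinearIndependent Fq x) {P Q : F[X]} (hP : P.degree < Fintype.card ι)
    (hQ : Q.degree < Fintype.card ι)
    (hv : ∀ i, leval q P (x i) = leval q Q (x i)) : P = Q :=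
  sub_eq_zero.1 <| eq_zero_of_leval_eq_zero Fq hx ((degree_sub_le P Q).trans_lt (max_lt hP hQ))
    fun i => by rw [leval_sub, hv, sub_self]

end OverFiniteField

theorem Fin.card_filter_le_val {n m : ℕ} : #{i : Fin n | m ≤ (i : ℕ)} = n - m := by
  have h := card_filter_add_card_filter_not (s := univ) fun i : Fin n => (i : ℕ) < m
  simp only [Fin.card_filter_val_lt, not_lt, card_univ, Fintype.card_fin] at h
  omega

theorem IsMSP.natDegree_le_card {Fq F ι : Type*} [Field Fq] [Field F] [Algebra Fq F] [Fintype ι]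
    {q : ℕ} {x : ι → F} {p : ι → Prop} [DecidablePred p] {M : F[X]}
    (hM : IsMSP Fq q (Submodule.span Fq {α | ∃ i, p i ∧ x i = α}) M) :
    M.natDegree ≤ #{i | p i} := by
  classical
  have hset : {α | ∃ i, p i ∧ x i = α} = ↑((univ.filter p).image x) := by ext; simp
  rw [hM.2.1, hset]
  exact (finrank_span_finset_le_card _).trans card_image_le

theorem interpolation_recursion_general
    (Fq F : Type*) [Field Fq] [Fintype Fq] [Field F] [Algebra Fq F]
    (q : ℕ) (hq : q = Fintype.card Fq)
    (s : ℕ) (x y : Fin s → F) (hx : LinearIndependent Fq x)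
    (t : ℕ) (ht : t = s / 2)
    (MA MB : Polynomial F)
    (hMA : IsMSP Fq q (Submodule.span Fq {α : F | ∃ i : Fin s, (i : ℕ) < t ∧ x i = α}) MA)
    (hMB : IsMSP Fq q (Submodule.span Fq {α : F | ∃ i : Fin s, t ≤ (i : ℕ) ∧ x i = α}) MB)
    (xt : Fin s → F)
    (hxt : ∀ i : Fin s,
      xt i = if (i : ℕ) < t then leval q MB (x i) else leval q MA (x i))
    (I I1 I2 : Polynomial F)
    (hId : I.degree < (s : ℕ)) (hIv : ∀ i : Fin s, leval q I (x i) = y i)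
    (hI1d : I1.degree < (t : ℕ))
    (hI1v : ∀ i : Fin s, (i : ℕ) < t → leval q I1 (xt i) = y i)
    (hI2d : I2.degree < ((s - t : ℕ) : WithBot ℕ))
    (hI2v : ∀ i : Fin s, t ≤ (i : ℕ) → leval q I2 (xt i) = y i) :
    I = lmul q I1 MB + lmul q I2 MA := by
  subst hq
  have hts : t ≤ s := ht ▸ Nat.div_le_self s 2
  have hMAdeg : MA.natDegree ≤ t :=
    hMA.natDegree_le_card.trans (Fin.card_filter_val_lt.trans_le (min_le_right _ _))
  have hMBdeg : MB.natDegree ≤ s - t := hMB.natDegree_le_card.trans_eq Fin.card_filter_le_val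
  have hdeg : (lmul (Fintype.card Fq) I1 MB + lmul (Fintype.card Fq) I2 MA).degree < (s : ℕ) :=
    (degree_add_le _ _).trans_lt <| max_lt
      (Nat.add_sub_cancel' hts ▸ degree_lmul_lt hI1d hMBdeg)
      (Nat.sub_add_cancel hts ▸ degree_lmul_lt hI2d hMAdeg)
  refine eq_of_leval_eq Fq hx (by simpa using hId) (by simpa using hdeg) fun i => ?_
  rw [hIv, leval_add, leval_lmul, leval_lmul]
  rcases lt_or_ge (i : ℕ) t with hi | hi
  · have hA : leval _ MA (x i) = 0 := (hMA.2.2 _).2 (Submodule.subset_span ⟨i, hi, rfl⟩)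
    rw [hA, leval_zero_right Fintype.card_ne_zero, add_zero, ← hI1v i hi, hxt, if_pos hi]
  · have hB : leval _ MB (x i) = 0 := (hMB.2.2 _).2 (Submodule.subset_span ⟨i, hi, rfl⟩)
    rw [hB, leval_zero_right Fintype.card_ne_zero, zero_add, ← hI2v i hi, hxt, if_neg hi.not_gt]

/-- Interpolation recursion: with `t = ⌊s/2⌋`, `A = ⟨x₁,…,x_t⟩`, `B = ⟨x_{t+1},…,x_s⟩`,
`x̃ᵢ = M_B(xᵢ)` for `i ≤ t` and `x̃ᵢ = M_A(xᵢ)` for `i > t`, the interpolation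
polynomial satisfies `I = I₁·M_B + I₂·M_A`. -/
theorem interpolation_recursion
    (Fq F : Type*) [Field Fq] [Fintype Fq] [Field F] [Fintype F] [Algebra Fq F]
    (q : ℕ) (hq : q = Fintype.card Fq)
    (s : ℕ) (x y : Fin s → F) (hx : LinearIndependent Fq x)
    (t : ℕ) (ht : t = s / 2)
    (MA MB : Polynomial F)
    (hMA : IsMSP Fq q (Submodule.span Fq {α : F | ∃ i : Fin s, (i : ℕ) < t ∧ x i = α}) MA)
    (hMB : IsMSP Fq q (Submodule.span Fq {α : F | ∃ i : Fin s, t ≤ (i : ℕ) ∧ x i = α}) MB)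
    (xt : Fin s → F)
    (hxt : ∀ i : Fin s,
      xt i = if (i : ℕ) < t then leval q MB (x i) else leval q MA (x i))
    (I I1 I2 : Polynomial F)
    (hId : I.degree < (s : ℕ)) (hIv : ∀ i : Fin s, leval q I (x i) = y i)
    (hI1d : I1.degree < (t : ℕ))
    (hI1v : ∀ i : Fin s, (i : ℕ) < t → leval q I1 (xt i) = y i)
    (hI2d : I2.degree < ((s - t : ℕ) : WithBot ℕ))
    (hI2v : ∀ i : Fin s, t ≤ (i : ℕ) → leval q I2 (xt i) = y i) :
    I = lmul q I1 MB + lmul q I2 MA :=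
  interpolation_recursion_general Fq F q hq s x y hx t ht MA MB hMA hMB xt hxt I I1 I2 hId hIv hI1d
    hI1v hI2d hI2v
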